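/- Let an I_ABC index coding problem with L receivers be given, with fitting pattern F_X (the L×rT pattern with a 1 at (t, dem(t)), X at the positions of S(t), and 0 elsewhere), and let G_ABC be its r×rT code matrix. Define the L×rT X-pattern B whose entry at (t, (m, j)) is 0 if F_X(t, (σ(m), j)) = 0, and X otherwise. Then there exists a 2L×r matrix D' such that D'·(G_ABC | C·G_ABC) fits the 2L×2rT block pattern (F_X B; B F_X); hence (G_ABC | C·G_ABC) is a scalar linear index code of length r for the extension problem. Moreover, if minrk(F_X) = r, then minrk((F_X B; B F_X)) = r, i.e., the extension is rank-invariant and (G_ABC | C·G_ABC) is an optimal code for it. -/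

import Mathlib

open Matrix

/-- A pattern entry: `some false` = 0, `some true` = 1, `none` = X. -/
abbrev PatEntry := Option Bool

/-- A matrix `M` fits a pattern `P` if `M` is `0` at every `0`-entry of `P`
and `1` at every `1`-entry of `P` (X-entries are unconstrained). -/
def Fits {L K 𝔽 : Type*} [Zero 𝔽] [One 𝔽]
    (P : Matrix L K PatEntry) (M : Matrix L K 𝔽) : Prop :=
  ∀ i j, (P i j = some false → M i j = 0) ∧ (P i j = some true → M i j = 1)

/-- The minrank of a pattern over the field `𝔽`. -/
noncomputable def minrk (𝔽 : Type*) [Field 𝔽] {L K : Type*} [Fintype K]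
    (P : Matrix L K PatEntry) : ℕ :=
  sInf {n | ∃ M : Matrix L K 𝔽, Fits P M ∧ M.rank = n}

/-- The three classes of message blocks in an `I_ABC` index coding problem. -/
inductive BlockType | A | B | C
deriving DecidableEq

/-!
Row `s` of `G_ABC` is a 0/1 vector supported on `(s, j)` for `j` of type A, on `(σ s, j)` for `j`
of type B, and on both for `j` of type C. The `I_ABC` conditions say precisely that every
receiver `t` demanding `(k, i)` has a row `ρ t ∈ {k, σ k}` whose support contains `(k, i)` and
otherwise lies in `S t`, so that row fits the `t`-th row of `F_X`. As `σ` is an involution,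
`C * G_ABC` is `G_ABC` with rows permuted by `σ`, and row `σ s` of `G_ABC` is row `s` with `σ`
applied to the message index; hence the rows `ρ t`, `σ (ρ t)` of `(G_ABC | C * G_ABC)` fit
`(F_X B; B F_X)`. Their rank is at most `r`, while the top-left block of any matrix fitting
`(F_X B; B F_X)` fits `F_X`, so its rank is at least `minrk F_X`.
-/

section Patterns

variable {L₁ L₂ K₁ K₂ 𝔽 : Type*}

theorem Fits.fromBlocks [Zero 𝔽] [One 𝔽]
    {P₁₁ : Matrix L₁ K₁ PatEntry} {P₁₂ : Matrix L₁ K₂ PatEntry}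
    {P₂₁ : Matrix L₂ K₁ PatEntry} {P₂₂ : Matrix L₂ K₂ PatEntry} {M₁₁ : Matrix L₁ K₁ 𝔽}
    {M₁₂ : Matrix L₁ K₂ 𝔽} {M₂₁ : Matrix L₂ K₁ 𝔽} {M₂₂ : Matrix L₂ K₂ 𝔽}
    (h₁₁ : Fits P₁₁ M₁₁) (h₁₂ : Fits P₁₂ M₁₂) (h₂₁ : Fits P₂₁ M₂₁) (h₂₂ : Fits P₂₂ M₂₂) :
    Fits (fromBlocks P₁₁ P₁₂ P₂₁ P₂₂) (fromBlocks M₁₁ M₁₂ M₂₁ M₂₂) := by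
  rintro (i | i) (j | j)
  exacts [h₁₁ i j, h₁₂ i j, h₂₁ i j, h₂₂ i j]

theorem Fits.submatrix_of_zeros [Zero 𝔽] [One 𝔽] {P Q : Matrix L₁ K₁ PatEntry}
    {M : Matrix L₁ K₁ 𝔽} (e : K₁ → K₁)
    (hQ : ∀ i j, Q i j = if P i (e j) = some false then some false else none) (h : Fits P M) :
    Fits Q (M.submatrix id e) := by
  intro i j
  rw [hQ]
  split_ifs with hP
  · exact ⟨fun _ => (h i (e j)).1 hP, nofun⟩
  · exact ⟨nofun, nofun⟩

theorem fits_of_support [Zero 𝔽] [One 𝔽] [DecidableEq K₁] {P : Matrix L₁ K₁ PatEntry}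
    {M : Matrix L₁ K₁ 𝔽} {dem : L₁ → K₁} {S : L₁ → Finset K₁}
    (hP : ∀ i j, P i j = if j = dem i then some true else if j ∈ S i then none else some false)
    (hdem : ∀ i, M i (dem i) = 1) (hsupp : ∀ i j, M i j ≠ 0 → j = dem i ∨ j ∈ S i) :
    Fits P M := by
  intro i j
  rw [hP]
  split_ifs with h₁ h₂
  · exact ⟨nofun, fun _ => h₁ ▸ hdem i⟩
  · exact ⟨nofun, nofun⟩
  · exact ⟨fun _ => by_contra fun h => (hsupp i j h).elim h₁ h₂, nofun⟩

theorem minrk_le_rank [Field 𝔽] [Fintype K₁] {P : Matrix L₁ K₁ PatEntry} {M : Matrix L₁ K₁ 𝔽}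
    (h : Fits P M) : minrk 𝔽 P ≤ M.rank :=
  Nat.sInf_le ⟨M, h, rfl⟩

theorem minrk_le_minrk_fromBlocks [Field 𝔽] [Fintype K₁] [Fintype K₂]
    {P₁₁ : Matrix L₁ K₁ PatEntry} {P₁₂ : Matrix L₁ K₂ PatEntry}
    {P₂₁ : Matrix L₂ K₁ PatEntry} {P₂₂ : Matrix L₂ K₂ PatEntry}
    (h : ∃ M : Matrix (L₁ ⊕ L₂) (K₁ ⊕ K₂) 𝔽, Fits (fromBlocks P₁₁ P₁₂ P₂₁ P₂₂) M) :
    minrk 𝔽 P₁₁ ≤ minrk 𝔽 (fromBlocks P₁₁ P₁₂ P₂₁ P₂₂) := by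
  obtain ⟨M₀, hM₀⟩ := h
  refine le_csInf ⟨_, M₀, hM₀, rfl⟩ ?_
  rintro _ ⟨M, hM, rfl⟩
  have hTopLeft : Fits P₁₁ (M.submatrix Sum.inl Sum.inl) := fun i j => hM (.inl i) (.inl j)
  exact (minrk_le_rank hTopLeft).trans (rank_submatrix_le M _ _)

end Patterns

section CodeMatrix

variable {n ι 𝔽 : Type*} [DecidableEq n] {σ : Equiv.Perm n}

/-- `m ∈ blockSupport σ b s` iff entry `(s, m)` of the block `I`, `C` or `I + C - C₁` of `G_ABC`
(for `b = A, B, C`) is nonzero; all three blocks are 0/1 matrices. -/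
def blockSupport (σ : Equiv.Perm n) : BlockType → n → Finset n
  | .A, s => {s}
  | .B, s => {σ s}
  | .C, s => {s, σ s}

theorem mem_blockSupport_apply_iff (hσ : Function.Involutive σ) (b : BlockType) (s m : n) :
    m ∈ blockSupport σ b (σ s) ↔ σ m ∈ blockSupport σ b s := by
  cases b <;> simp only [blockSupport, Finset.mem_singleton, Finset.mem_insert] <;>
    grind [hσ.eq_iff, Function.Involutive]

def codeMatrix [Zero 𝔽] [One 𝔽] (σ : Equiv.Perm n) (ty : ι → BlockType) :
    Matrix n (n × ι) 𝔽 :=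
  of fun s p => if p.1 ∈ blockSupport σ (ty p.2) s then 1 else 0

theorem codeMatrix_submatrix_perm_comp [Zero 𝔽] [One 𝔽] (hσ : Function.Involutive σ)
    (ty : ι → BlockType) {L : Type*} (ρ : L → n) :
    (codeMatrix σ ty : Matrix n (n × ι) 𝔽).submatrix (σ ∘ ρ) id =
      ((codeMatrix σ ty).submatrix ρ id).submatrix id (Prod.map σ id) := by
  ext t ⟨m, j⟩
  simp [codeMatrix, mem_blockSupport_apply_iff hσ]

theorem mul_eq_submatrix_of_apply_eq_ite [Fintype n] [NonAssocSemiring 𝔽]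
    (hσ : Function.Involutive σ) {C : Matrix n n 𝔽} (hC : ∀ i j, C i j = if i = σ j then 1 else 0)
    {m : Type*} (M : Matrix n m 𝔽) : C * M = M.submatrix σ id := by
  have : C = σ.toPEquiv.toMatrix := by
    ext i j
    simp only [hC, PEquiv.toMatrix_apply, Equiv.toPEquiv_apply, Option.mem_some_iff,
      hσ.eq_iff]
  rw [this, PEquiv.toMatrix_toPEquiv_mul]

theorem one_add_sub_apply_eq_ite [Ring 𝔽] (hσ : Function.Involutive σ) {C C1 : Matrix n n 𝔽}
    (hC : ∀ i j, C i j = if i = σ j then 1 else 0)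
    (hC1 : ∀ i j, C1 i j = if i = j ∧ σ i = i then 1 else 0) (s m : n) :
    (1 + C - C1) s m = if m ∈ blockSupport σ .C s then 1 else 0 := by
  have hσsm : s = σ m ↔ m = σ s := (hσ.eq_iff (x := s) (y := m)).symm.trans eq_comm
  simp only [Matrix.sub_apply, Matrix.add_apply, one_apply, hC, hC1, blockSupport,
    Finset.mem_insert, Finset.mem_singleton, hσsm]
  by_cases h₁ : m = s
  · subst h₁
    by_cases h₂ : σ m = m
    · simp [h₂]
    · simp [h₂, Ne.symm h₂]
  · simp [h₁, Ne.symm h₁]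

theorem eq_codeMatrix [Ring 𝔽] (hσ : Function.Involutive σ) {ty : ι → BlockType}
    {C C1 : Matrix n n 𝔽} (hC : ∀ i j, C i j = if i = σ j then 1 else 0)
    (hC1 : ∀ i j, C1 i j = if i = j ∧ σ i = i then 1 else 0) {G : Matrix n (n × ι) 𝔽}
    (hGA : ∀ s m j, ty j = .A → G s (m, j) = (1 : Matrix n n 𝔽) s m)
    (hGB : ∀ s m j, ty j = .B → G s (m, j) = C s m)
    (hGC : ∀ s m j, ty j = .C → G s (m, j) = (1 + C - C1) s m) :
    G = codeMatrix σ ty := by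
  ext s ⟨m, j⟩
  cases hj : ty j
  · simp [hGA s m j hj, codeMatrix, blockSupport, hj, one_apply, eq_comm]
  · simp [hGB s m j hj, codeMatrix, blockSupport, hj, hC,
      (hσ.eq_iff (x := s) (y := m)).symm.trans eq_comm]
  · simp [hGC s m j hj, codeMatrix, hj, one_add_sub_apply_eq_ite hσ hC hC1]

end CodeMatrix

section DecodingRow

variable {n ι : Type*} [DecidableEq n] {σ : Equiv.Perm n} {ty : ι → BlockType}

def IsDecodingRow (σ : Equiv.Perm n) (ty : ι → BlockType) (k : n) (i : ι)
    (S : Finset (n × ι)) (s : n) : Prop :=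
  k ∈ blockSupport σ (ty i) s ∧
    ∀ m j, m ∈ blockSupport σ (ty j) s → (m, j) = (k, i) ∨ (m, j) ∈ S

theorem exists_isDecodingRow (hσ : Function.Involutive σ) {k : n} {i : ι} {S : Finset (n × ι)}
    (hA : ty i = BlockType.A →
      (∀ j, ty j = BlockType.A → j ≠ i → (k, j) ∈ S) ∧
      (∀ j, ty j = BlockType.B → (σ k, j) ∈ S) ∧
      (∀ j, ty j = BlockType.C → (k, j) ∈ S) ∧
      (σ k ≠ k → ∀ j, ty j = BlockType.C → (σ k, j) ∈ S))
    (hB : ty i = BlockType.B →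
      (∀ j, ty j = BlockType.B → j ≠ i → (k, j) ∈ S) ∧
      (∀ j, ty j = BlockType.A → (σ k, j) ∈ S) ∧
      (∀ j, ty j = BlockType.C → (k, j) ∈ S) ∧
      (σ k ≠ k → ∀ j, ty j = BlockType.C → (σ k, j) ∈ S))
    (hC : ty i = BlockType.C →
      (∀ j, ty j = BlockType.C → j ≠ i → (k, j) ∈ S) ∧
      (σ k ≠ k →
        (∀ j, ty j = BlockType.C → (σ k, j) ∈ S) ∧
        (((∀ j, ty j = BlockType.A → (k, j) ∈ S) ∧
            (∀ j, ty j = BlockType.B → (σ k, j) ∈ S)) ∨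
          ((∀ j, ty j = BlockType.A → (σ k, j) ∈ S) ∧
            (∀ j, ty j = BlockType.B → (k, j) ∈ S)))) ∧
      (σ k = k →
        (∀ j, ty j = BlockType.A → (k, j) ∈ S) ∧
        (∀ j, ty j = BlockType.B → (σ k, j) ∈ S))) :
    ∃ s, IsDecodingRow σ ty k i S s := by
  have hσk : σ (σ k) = k := hσ k
  simp only [IsDecodingRow]
  cases hi : ty i with
  | A =>
    obtain ⟨hAA, hAB, hAC, hAC'⟩ := hA hi
    refine ⟨k, by simp [blockSupport], fun m j hm => ?_⟩
    by_cases hk : σ k = k <;> cases hj : ty j <;>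
      simp only [hj, blockSupport, Finset.mem_insert, Finset.mem_singleton] at hm <;> grind
  | B =>
    obtain ⟨hBB, hBA, hBC, hBC'⟩ := hB hi
    refine ⟨σ k, by simp [blockSupport, hσk], fun m j hm => ?_⟩
    by_cases hk : σ k = k <;> cases hj : ty j <;>
      simp only [hj, blockSupport, Finset.mem_insert, Finset.mem_singleton] at hm <;> grind
  | C =>
    obtain ⟨hCC, hmoved, hfixed⟩ := hC hi
    by_cases hk : σ k = k
    · obtain ⟨hCA, hCB⟩ := hfixed hk
      refine ⟨k, by simp [blockSupport], fun m j hm => ?_⟩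
      cases hj : ty j <;>
        simp only [hj, blockSupport, Finset.mem_insert, Finset.mem_singleton] at hm <;> grind
    · obtain ⟨hCC', ⟨hCA, hCB⟩ | ⟨hCA, hCB⟩⟩ := hmoved hk
      · refine ⟨k, by simp [blockSupport], fun m j hm => ?_⟩
        cases hj : ty j <;>
          simp only [hj, blockSupport, Finset.mem_insert, Finset.mem_singleton] at hm <;> grind
      · refine ⟨σ k, by simp [blockSupport, hσk], fun m j hm => ?_⟩
        cases hj : ty j <;>
          simp only [hj, blockSupport, Finset.mem_insert, Finset.mem_singleton] at hm <;> grind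

theorem fits_codeMatrix_submatrix {L 𝔽 : Type*} [DecidableEq ι] [Zero 𝔽] [One 𝔽]
    {FX : Matrix L (n × ι) PatEntry} {dem : L → n × ι} {S : L → Finset (n × ι)} {ρ : L → n}
    (hFX : ∀ t p, FX t p = if p = dem t then some true else if p ∈ S t then none else some false)
    (hρ : ∀ t, IsDecodingRow σ ty (dem t).1 (dem t).2 (S t) (ρ t)) :
    Fits FX ((codeMatrix σ ty : Matrix n (n × ι) 𝔽).submatrix ρ id) := by
  refine fits_of_support hFX (fun t => by simp [codeMatrix, (hρ t).1]) fun t ⟨m, j⟩ h => ?_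
  have hm : m ∈ blockSupport σ (ty j) (ρ t) := by
    by_contra hm
    simp [codeMatrix, hm] at h
  exact (hρ t).2 m j hm

end DecodingRow

theorem fromCols_submatrix_sumElim {n K L 𝔽 : Type*} {σ : Equiv.Perm n}
    (hσ : Function.Involutive σ) (G : Matrix n K 𝔽) (ρ : L → n) :
    (fromCols G (G.submatrix σ id)).submatrix (Sum.elim ρ (σ ∘ ρ)) id =
      fromBlocks (G.submatrix ρ id) (G.submatrix (σ ∘ ρ) id) (G.submatrix (σ ∘ ρ) id)
        (G.submatrix ρ id) := by
  ext (t | t) (p | p) <;> simp [hσ (ρ t)]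

theorem GABC_two_order_extension {r T L : ℕ} {𝔽 : Type*} [Field 𝔽]
    (σ : Equiv.Perm (Fin r)) (hσ : ∀ i, σ (σ i) = i)
    (C C1 : Matrix (Fin r) (Fin r) 𝔽)
    (hC : ∀ i j, C i j = if i = σ j then 1 else 0)
    (hC1 : ∀ i j, C1 i j = if i = j ∧ σ i = i then 1 else 0)
    (ty : Fin T → BlockType)
    (dem : Fin L → Fin r × Fin T) (S : Fin L → Finset (Fin r × Fin T))
    (hA : ∀ t, ty (dem t).2 = BlockType.A →
      (∀ j, ty j = BlockType.A → j ≠ (dem t).2 → ((dem t).1, j) ∈ S t) ∧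
      (∀ j, ty j = BlockType.B → (σ (dem t).1, j) ∈ S t) ∧
      (∀ j, ty j = BlockType.C → ((dem t).1, j) ∈ S t) ∧
      (σ (dem t).1 ≠ (dem t).1 →
        ∀ j, ty j = BlockType.C → (σ (dem t).1, j) ∈ S t))
    (hB : ∀ t, ty (dem t).2 = BlockType.B →
      (∀ j, ty j = BlockType.B → j ≠ (dem t).2 → ((dem t).1, j) ∈ S t) ∧
      (∀ j, ty j = BlockType.A → (σ (dem t).1, j) ∈ S t) ∧
      (∀ j, ty j = BlockType.C → ((dem t).1, j) ∈ S t) ∧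
      (σ (dem t).1 ≠ (dem t).1 →
        ∀ j, ty j = BlockType.C → (σ (dem t).1, j) ∈ S t))
    (hCty : ∀ t, ty (dem t).2 = BlockType.C →
      (∀ j, ty j = BlockType.C → j ≠ (dem t).2 → ((dem t).1, j) ∈ S t) ∧
      (σ (dem t).1 ≠ (dem t).1 →
        (∀ j, ty j = BlockType.C → (σ (dem t).1, j) ∈ S t) ∧
        (((∀ j, ty j = BlockType.A → ((dem t).1, j) ∈ S t) ∧
            (∀ j, ty j = BlockType.B → (σ (dem t).1, j) ∈ S t)) ∨
          ((∀ j, ty j = BlockType.A → (σ (dem t).1, j) ∈ S t) ∧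
            (∀ j, ty j = BlockType.B → ((dem t).1, j) ∈ S t)))) ∧
      (σ (dem t).1 = (dem t).1 →
        (∀ j, ty j = BlockType.A → ((dem t).1, j) ∈ S t) ∧
        (∀ j, ty j = BlockType.B → (σ (dem t).1, j) ∈ S t)))
    (GABC : Matrix (Fin r) (Fin r × Fin T) 𝔽)
    (hG : ∀ (s m : Fin r) (j : Fin T), GABC s (m, j) =
      match ty j with
      | BlockType.A => (1 : Matrix (Fin r) (Fin r) 𝔽) s m
      | BlockType.B => C s m
      | BlockType.C => (1 + C - C1) s m)
    (FX : Matrix (Fin L) (Fin r × Fin T) PatEntry)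
    (hFX : ∀ t p, FX t p =
      if p = dem t then some true else if p ∈ S t then none else some false)
    (B : Matrix (Fin L) (Fin r × Fin T) PatEntry)
    (hBdef : ∀ t (m : Fin r) (j : Fin T), B t (m, j) =
      if FX t (σ m, j) = some false then some false else none) :
    (∃ D' : Matrix (Fin L ⊕ Fin L) (Fin r) 𝔽,
        Fits (Matrix.fromBlocks FX B B FX)
          (D' * Matrix.fromCols GABC (C * GABC))) ∧
    (minrk 𝔽 FX = r →
        minrk 𝔽 (Matrix.fromBlocks FX B B FX) = r) := by
  have hGABC : GABC = codeMatrix σ ty :=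
    eq_codeMatrix hσ hC hC1 (fun s m j h => by rw [hG, h]) (fun s m j h => by rw [hG, h])
      (fun s m j h => by rw [hG, h])
  rw [hGABC]
  set G : Matrix (Fin r) (Fin r × Fin T) 𝔽 := codeMatrix σ ty
  choose ρ hρ using fun t => exists_isDecodingRow hσ (hA t) (hB t) (hCty t)
  have hR : Fits FX (G.submatrix ρ id) := fits_codeMatrix_submatrix hFX hρ
  have hR' : Fits B (G.submatrix (σ ∘ ρ) id) :=
    codeMatrix_submatrix_perm_comp (𝔽 := 𝔽) hσ ty ρ ▸
      hR.submatrix_of_zeros (Prod.map σ id) fun t ⟨m, j⟩ => hBdef t m j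
  set D' : Matrix (Fin L ⊕ Fin L) (Fin r) 𝔽 :=
    (1 : Matrix (Fin r) (Fin r) 𝔽).submatrix (Sum.elim ρ (σ ∘ ρ)) (Equiv.refl _)
  have hfit : Fits (fromBlocks FX B B FX) (D' * fromCols G (C * G)) := by
    rw [one_submatrix_mul, mul_eq_submatrix_of_apply_eq_ite hσ hC, Equiv.refl_symm,
      Equiv.coe_refl, Function.id_comp, fromCols_submatrix_sumElim hσ]
    exact hR.fromBlocks hR' hR' hR
  refine ⟨⟨D', hfit⟩, fun hmin => le_antisymm ?_ ?_⟩
  · calc minrk 𝔽 (fromBlocks FX B B FX) ≤ (D' * fromCols G (C * G)).rank := minrk_le_rank hfit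
      _ ≤ D'.rank := rank_mul_le_left _ _
      _ ≤ r := (rank_le_card_width D').trans_eq (Fintype.card_fin r)
  · exact hmin.symm.le.trans (minrk_le_minrk_fromBlocks ⟨_, hfit⟩)
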